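/- arXiv:1910.10861 — 9 statements merged into one kernel-verified Lean document; each statement's English description precedes it below -/
import Mathlib

section
/- Let H, r, b, λ be positive integers with λ ≤ min{r, b} and r + b − 2λ < H. Define an array P indexed by rows B ∈ C([H], b) and columns A ∈ C([H], r) by: p_{B,A} = ((A ∪ B) \ (A ∩ B), A ∩ B) if |A ∩ B| = λ, and p_{B,A} = * otherwise. Then P satisfies PDA condition C2: if p_{B₁,A₁} = p_{B₂,A₂} is a non-star entry with (B₁, A₁) ≠ (B₂, A₂), then B₁ ≠ B₂, A₁ ≠ A₂, and both p_{B₁,A₂} and p_{B₂,A₁} are stars. -/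
/-!
Equality of the entries means `A₁ ∩ B₁ = A₂ ∩ B₂` and, adding this back to the symmetric
differences, `A₁ ∪ B₁ = A₂ ∪ B₂`. In a distributive lattice `b` is determined by `a ⊓ b` and
`a ⊔ b`, so sharing a row or a column forces the positions to coincide. If the cross entry
`p_{B₁,A₂}` were not a star, then `A₁ ∩ B₁ ⊆ A₂ ∩ B₁` would be an equality by counting, so
every element of `A₂ ⊆ A₁ ∪ B₁` lying in `B₁` would lie in `A₁`; hence `A₂ ⊆ A₁`, and
`|A₁| = |A₂|` gives `A₁ = A₂`.
-/

namespace Finset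

variable {α : Type*} [DecidableEq α]

theorem union_eq_of_sdiff_inter_eq_of_inter_eq {A₁ B₁ A₂ B₂ : Finset α}
    (hD : (A₁ ∪ B₁) \ (A₁ ∩ B₁) = (A₂ ∪ B₂) \ (A₂ ∩ B₂)) (hI : A₁ ∩ B₁ = A₂ ∩ B₂) :
    A₁ ∪ B₁ = A₂ ∪ B₂ := by
  rw [← sdiff_union_of_subset (inter_subset_union (s := A₁)), hD, hI,
    sdiff_union_of_subset inter_subset_union]

theorem eq_of_subset_union_of_card_inter_eq {A₁ A₂ B : Finset α}
    (hsub : A₂ ⊆ A₁ ∪ B) (hinter : A₁ ∩ B ⊆ A₂)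
    (hcard_inter : #(A₂ ∩ B) = #(A₁ ∩ B)) (hcard : #A₁ = #A₂) : A₁ = A₂ := by
  have hI : A₁ ∩ B = A₂ ∩ B :=
    eq_of_subset_of_card_le (subset_inter hinter inter_subset_right) hcard_inter.le
  have hA : A₂ ⊆ A₁ := fun x hx ↦ by
    rcases mem_union.mp (hsub hx) with h | h
    · exact h
    · exact (mem_inter.mp (hI ▸ mem_inter.mpr ⟨hx, h⟩ : x ∈ A₁ ∩ B)).1
  exact (eq_of_subset_of_card_le hA hcard.le).symm

end Finset

open Finset

theorem stmt4_general (H r l : ℕ)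
    (B₁ B₂ A₁ A₂ : Finset ℕ)
    (hA₁ : A₁ ∈ (Finset.Icc 1 H).powersetCard r)
    (hA₂ : A₂ ∈ (Finset.Icc 1 H).powersetCard r)
    (h₁ : (A₁ ∩ B₁).card = l) (h₂ : (A₂ ∩ B₂).card = l)
    (heq : ((A₁ ∪ B₁) \ (A₁ ∩ B₁), A₁ ∩ B₁) = ((A₂ ∪ B₂) \ (A₂ ∩ B₂), A₂ ∩ B₂))
    (hne : (B₁, A₁) ≠ (B₂, A₂)) :
    B₁ ≠ B₂ ∧ A₁ ≠ A₂ ∧ (A₂ ∩ B₁).card ≠ l ∧ (A₁ ∩ B₂).card ≠ l := by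
  obtain ⟨hD, hI⟩ := Prod.mk.inj heq
  have hU := union_eq_of_sdiff_inter_eq_of_inter_eq hD hI
  have hcard : #A₁ = #A₂ := by rw [(mem_powersetCard.mp hA₁).2, (mem_powersetCard.mp hA₂).2]
  have hAA : A₁ ≠ A₂ := by
    rintro rfl
    refine hne (Prod.ext (eq_of_inf_eq_sup_eq (a := A₁) ?_ ?_) rfl)
    · simpa only [inf_eq_inter, inter_comm] using hI
    · simpa only [sup_eq_union, union_comm] using hU
  refine ⟨?_, hAA, fun hc ↦ hAA ?_, fun hc ↦ hAA (Eq.symm ?_)⟩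
  · rintro rfl
    exact hAA (eq_of_inf_eq_sup_eq (a := B₁) hI hU)
  · exact eq_of_subset_union_of_card_inter_eq (hU ▸ subset_union_left) (hI ▸ inter_subset_left)
      (hc.trans h₁.symm) hcard
  · exact eq_of_subset_union_of_card_inter_eq (hU ▸ subset_union_left) (hI ▸ inter_subset_left)
      (hc.trans h₂.symm) hcard.symm

/-- PDA condition C2 for the first array `P` of Construction 1: entries are
`((A ∪ B) \ (A ∩ B), A ∩ B)` when `|A ∩ B| = λ` (star otherwise). If two
non-star entries coincide at distinct positions, then the rows differ, the
columns differ, and both cross entries are stars. -/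
theorem stmt4 (H r b l : ℕ) (hH : 0 < H) (hr : 0 < r) (hb : 0 < b) (hl : 0 < l)
    (hlr : l ≤ r) (hlb : l ≤ b) (hm : r + b - 2 * l < H)
    (B₁ B₂ A₁ A₂ : Finset ℕ)
    (hB₁ : B₁ ∈ (Finset.Icc 1 H).powersetCard b)
    (hB₂ : B₂ ∈ (Finset.Icc 1 H).powersetCard b)
    (hA₁ : A₁ ∈ (Finset.Icc 1 H).powersetCard r)
    (hA₂ : A₂ ∈ (Finset.Icc 1 H).powersetCard r)
    (h₁ : (A₁ ∩ B₁).card = l) (h₂ : (A₂ ∩ B₂).card = l)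
    (heq : ((A₁ ∪ B₁) \ (A₁ ∩ B₁), A₁ ∩ B₁) = ((A₂ ∪ B₂) \ (A₂ ∩ B₂), A₂ ∩ B₂))
    (hne : (B₁, A₁) ≠ (B₂, A₂)) :
    B₁ ≠ B₂ ∧ A₁ ≠ A₂ ∧ (A₂ ∩ B₁).card ≠ l ∧ (A₁ ∩ B₂).card ≠ l :=
  stmt4_general H r l B₁ B₂ A₁ A₂ hA₁ hA₂ h₁ h₂ heq hne
end

section
/- Let H, r, b, λ be positive integers with λ ≤ min{r, b} and r + b − 2λ < H. Define an array P' indexed by rows B ∈ C([H], b) and columns A ∈ C([H], r) by: p'_{B,A} = ((A ∪ B) \ (A ∩ B), A \ B) if |A ∩ B| = λ, and star otherwise. Then P' satisfies PDA condition C2: equal non-star entries lie in distinct rows and distinct columns, and the two cross entries are stars. -/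
/-! The entry `(A ∆ B, A \ B)` determines both `A \ B` and `B \ A = (A ∆ B) \ (A \ B)`, so two
positions carrying the same entry can only differ in `L = A ∩ B`; fixing the row `B` or the
column `A` fixes `L` as well. Both cross intersections `A₂ ∩ B₁` and `A₁ ∩ B₂` equal `L₁ ∩ L₂`,
which has fewer than `λ` elements because `L₁ ≠ L₂` both have `λ` elements. -/

namespace Finset

variable {α : Type*} [DecidableEq α] {A₁ A₂ B₁ B₂ : Finset α}

theorem union_sdiff_inter_sdiff_sdiff (A B : Finset α) :
    ((A ∪ B) \ (A ∩ B)) \ (A \ B) = B \ A := by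
  ext x
  simp only [mem_sdiff, mem_union, mem_inter]
  tauto

theorem eq_and_eq_of_sdiff_eq_of_inter_eq (hJ : A₁ \ B₁ = A₂ \ B₂) (hK : B₁ \ A₁ = B₂ \ A₂)
    (hL : A₁ ∩ B₁ = A₂ ∩ B₂) : A₁ = A₂ ∧ B₁ = B₂ := by
  constructor
  · rw [← sdiff_union_inter A₁ B₁, ← sdiff_union_inter A₂ B₂, hJ, hL]
  · rw [← sdiff_union_inter B₁ A₁, ← sdiff_union_inter B₂ A₂, hK, inter_comm, hL, inter_comm]

theorem inter_eq_inter_of_left_eq_of_sdiff_eq (hA : A₁ = A₂) (hJ : A₁ \ B₁ = A₂ \ B₂) :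
    A₁ ∩ B₁ = A₂ ∩ B₂ := by
  rw [← sdiff_sdiff_self_left, ← sdiff_sdiff_self_left, hJ, hA]

theorem inter_cross_eq_of_sdiff_eq (hJ : A₁ \ B₁ = A₂ \ B₂) (hK : B₁ \ A₁ = B₂ \ A₂) :
    A₂ ∩ B₁ = (A₁ ∩ B₁) ∩ (A₂ ∩ B₂) := by
  ext x
  have hJx := Finset.ext_iff.mp hJ x
  have hKx := Finset.ext_iff.mp hK x
  simp only [mem_sdiff, mem_inter] at hJx hKx ⊢
  tauto

theorem card_inter_lt_of_card_eq_of_ne {s t : Finset α} {l : ℕ} (hs : #s = l) (ht : #t = l)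
    (hst : s ≠ t) : #(s ∩ t) < l := by
  have hst' : ¬s ⊆ t := fun h => hst (eq_of_subset_of_card_le h (by rw [hs, ht]))
  rw [← hs]
  exact card_lt_card (inf_lt_left.mpr hst')

end Finset

theorem stmt6_general (l : ℕ)
    (B₁ B₂ A₁ A₂ : Finset ℕ)
    (h₁ : (A₁ ∩ B₁).card = l) (h₂ : (A₂ ∩ B₂).card = l)
    (heq : ((A₁ ∪ B₁) \ (A₁ ∩ B₁), A₁ \ B₁) = ((A₂ ∪ B₂) \ (A₂ ∩ B₂), A₂ \ B₂))
    (hne : (B₁, A₁) ≠ (B₂, A₂)) :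
    B₁ ≠ B₂ ∧ A₁ ≠ A₂ ∧ (A₂ ∩ B₁).card ≠ l ∧ (A₁ ∩ B₂).card ≠ l := by
  obtain ⟨hC, hJ⟩ := Prod.mk.inj heq
  have hK : B₁ \ A₁ = B₂ \ A₂ := by
    rw [← Finset.union_sdiff_inter_sdiff_sdiff, hC, hJ, Finset.union_sdiff_inter_sdiff_sdiff]
  have hL : A₁ ∩ B₁ ≠ A₂ ∩ B₂ := fun hL => by
    obtain ⟨hA, hB⟩ := Finset.eq_and_eq_of_sdiff_eq_of_inter_eq hJ hK hL
    exact hne (by rw [hA, hB])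
  have hcross := Finset.card_inter_lt_of_card_eq_of_ne h₁ h₂ hL
  refine ⟨fun hB => hL ?_,
    fun hA => hL (Finset.inter_eq_inter_of_left_eq_of_sdiff_eq hA hJ), ?_, ?_⟩
  · simpa only [Finset.inter_comm B₁, Finset.inter_comm B₂] using
      Finset.inter_eq_inter_of_left_eq_of_sdiff_eq hB hK
  · rw [Finset.inter_cross_eq_of_sdiff_eq hJ hK]
    exact hcross.ne
  · rw [Finset.inter_cross_eq_of_sdiff_eq hJ.symm hK.symm, Finset.inter_comm]
    exact hcross.ne

/-- PDA condition C2 for the second array `P'` of Construction 1: entries are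
`((A ∪ B) \ (A ∩ B), A \ B)` when `|A ∩ B| = λ` (star otherwise). Equal non-star
entries at distinct positions lie in distinct rows and distinct columns, and
both cross entries are stars. -/
theorem stmt6 (H r b l : ℕ) (hH : 0 < H) (hr : 0 < r) (hb : 0 < b) (hl : 0 < l)
    (hlr : l ≤ r) (hlb : l ≤ b) (hm : r + b - 2 * l < H)
    (B₁ B₂ A₁ A₂ : Finset ℕ)
    (hB₁ : B₁ ∈ (Finset.Icc 1 H).powersetCard b)
    (hB₂ : B₂ ∈ (Finset.Icc 1 H).powersetCard b)
    (hA₁ : A₁ ∈ (Finset.Icc 1 H).powersetCard r)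
    (hA₂ : A₂ ∈ (Finset.Icc 1 H).powersetCard r)
    (h₁ : (A₁ ∩ B₁).card = l) (h₂ : (A₂ ∩ B₂).card = l)
    (heq : ((A₁ ∪ B₁) \ (A₁ ∩ B₁), A₁ \ B₁) = ((A₂ ∪ B₂) \ (A₂ ∩ B₂), A₂ \ B₂))
    (hne : (B₁, A₁) ≠ (B₂, A₂)) :
    B₁ ≠ B₂ ∧ A₁ ≠ A₂ ∧ (A₂ ∩ B₁).card ≠ l ∧ (A₁ ∩ B₂).card ≠ l :=
  stmt6_general l B₁ B₂ A₁ A₂ h₁ h₂ heq hne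
end

section
/- Let H, r, b, λ be positive integers with λ ≤ min{r,b} and r + b − 2λ < H. The number of distinct non-star symbols occurring in the array P of Construction 1 is exactly C(H, r + b − 2λ) · C(H − (r + b − 2λ), λ). -/
/-!
A pair `(B, A)` with `|A ∩ B| = λ` produces the symbol `(A ∆ B, A ∩ B)`, a disjoint pair of
sizes `r + b - 2λ` and `λ`. Conversely every such disjoint pair `(C, I)` occurs: split `C` into
parts of sizes `r - λ` and `b - λ` and add `I` to both. Disjoint pairs are counted by choosing
`C` first and then `I` in the complement of `C`.
-/

open Finset

namespace Finset

variable {α : Type*} [DecidableEq α]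

/-- The non-star symbols of the array `P` over the ground set `U`. -/
def disjointPairs (U : Finset α) (m l : ℕ) : Finset (Finset α × Finset α) :=
  (U.powersetCard m ×ˢ U.powersetCard l).filter fun q => Disjoint q.1 q.2

theorem disjointPairs_eq_biUnion (U : Finset α) (m l : ℕ) :
    disjointPairs U m l =
      (U.powersetCard m).biUnion fun C =>
        ((U \ C).powersetCard l).map (Function.Embedding.sectR C _) := by
  ext ⟨C, I⟩
  simp only [disjointPairs, mem_filter, mem_product, mem_biUnion, mem_map, mem_powersetCard,
    Function.Embedding.sectR_apply, Prod.mk.injEq, subset_sdiff]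
  constructor
  · rintro ⟨⟨hC, hIU, hI⟩, hCI⟩
    exact ⟨C, hC, I, ⟨⟨hIU, hCI.symm⟩, hI⟩, rfl, rfl⟩
  · rintro ⟨C, hC, I, ⟨⟨hIU, hIC⟩, hI⟩, rfl, rfl⟩
    exact ⟨⟨hC, hIU, hI⟩, hIC.symm⟩

theorem card_disjointPairs (U : Finset α) (m l : ℕ) :
    #(disjointPairs U m l) = (#U).choose m * (#U - m).choose l := by
  rw [disjointPairs_eq_biUnion, card_biUnion]
  · rw [sum_congr rfl fun C hC => ?_, sum_const, card_powersetCard, smul_eq_mul]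
    rw [mem_powersetCard] at hC
    rw [card_map, card_powersetCard, card_sdiff_of_subset hC.1, hC.2]
  · intro C _ D _ hCD
    simp only [disjoint_left, mem_map, Function.Embedding.sectR_apply]
    rintro _ ⟨I, _, rfl⟩ ⟨J, _, h⟩
    exact hCD (Prod.mk.inj h).1.symm

theorem card_symmDiff (A B : Finset α) : #(symmDiff A B) = #A + #B - 2 * #(A ∩ B) := by
  rw [symmDiff_eq_sup_sdiff_inf, sup_eq_union, inf_eq_inter,
    card_sdiff_of_subset (inter_subset_left.trans subset_union_left)]
  have := card_union_add_card_inter A B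
  omega

theorem exists_symmDiff_eq_inter_eq {C I : Finset α} (hCI : Disjoint C I) {s : ℕ}
    (hs : s ≤ #C) :
    ∃ A B : Finset α, A ∪ B ⊆ C ∪ I ∧ symmDiff A B = C ∧ A ∩ B = I ∧
      #A = s + #I ∧ #B = #C - s + #I := by
  obtain ⟨D, hDC, hD⟩ := exists_subset_card_eq hs
  have hinter : (D ∪ I) ∩ (C \ D ∪ I) = I := by
    rw [← inter_union_distrib_right, inter_sdiff_self, empty_union]
  have hunion : (D ∪ I) ∪ (C \ D ∪ I) = C ∪ I := by
    rw [union_union_union_comm, union_sdiff_of_subset hDC, union_self]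
  refine ⟨D ∪ I, C \ D ∪ I, hunion.le, ?_, hinter, ?_, ?_⟩
  · rw [symmDiff_eq_sup_sdiff_inf, sup_eq_union, inf_eq_inter, hunion, hinter,
      union_sdiff_cancel_right hCI]
  · rw [card_union_of_disjoint (hCI.mono_left hDC), hD]
  · rw [card_union_of_disjoint (hCI.mono_left sdiff_subset), card_sdiff_of_subset hDC, hD]

theorem image_inter_eq_disjointPairs (U : Finset α) {r b l : ℕ} (hlr : l ≤ r) (hlb : l ≤ b) :
    (((U.powersetCard b ×ˢ U.powersetCard r).filter fun p => #(p.2 ∩ p.1) = l).image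
        fun p => ((p.2 ∪ p.1) \ (p.2 ∩ p.1), p.2 ∩ p.1)) =
      disjointPairs U (r + b - 2 * l) l := by
  have hsymm (A B : Finset α) : (A ∪ B) \ (A ∩ B) = symmDiff A B :=
    (symmDiff_eq_sup_sdiff_inf A B).symm
  ext ⟨C, I⟩
  simp only [disjointPairs, mem_image, mem_filter, mem_product, mem_powersetCard,
    Prod.exists, Prod.mk.injEq, hsymm]
  constructor
  · rintro ⟨B, A, ⟨⟨⟨hBU, hB⟩, hAU, hA⟩, hl⟩, rfl, rfl⟩
    refine ⟨⟨⟨symmDiff_le_sup.trans (union_subset hAU hBU), ?_⟩,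
      inter_subset_left.trans hAU, hl⟩, disjoint_symmDiff_inf A B⟩
    rw [card_symmDiff, hA, hB, hl]
  · rintro ⟨⟨⟨hCU, hC⟩, hIU, hI⟩, hCI⟩
    obtain ⟨A, B, hABU, hsymmAB, hinter, hA, hB⟩ :=
      exists_symmDiff_eq_inter_eq hCI (show r - l ≤ #C by omega)
    have hABU' : A ∪ B ⊆ U := hABU.trans (union_subset hCU hIU)
    refine ⟨B, A, ⟨⟨⟨subset_union_right.trans hABU', by omega⟩,
      subset_union_left.trans hABU', by omega⟩, by rw [hinter, hI]⟩, hsymmAB, hinter⟩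

end Finset

theorem stmt8_general (H r b l : ℕ) (hlr : l ≤ r) (hlb : l ≤ b) :
    (((((Finset.Icc 1 H).powersetCard b) ×ˢ ((Finset.Icc 1 H).powersetCard r)).filter
        (fun p => (p.2 ∩ p.1).card = l)).image
        (fun p => ((p.2 ∪ p.1) \ (p.2 ∩ p.1), p.2 ∩ p.1))).card
      = Nat.choose H (r + b - 2 * l) * Nat.choose (H - (r + b - 2 * l)) l := by
  rw [image_inter_eq_disjointPairs _ hlr hlb, card_disjointPairs, Nat.card_Icc,
    Nat.add_sub_cancel]

/-- The number of distinct non-star symbols occurring in the array `P` of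
Construction 1 is `C(H, r+b−2λ) · C(H−(r+b−2λ), λ)`. -/
theorem stmt8 (H r b l : ℕ) (hH : 0 < H) (hr : 0 < r) (hb : 0 < b) (hl : 0 < l)
    (hlr : l ≤ r) (hlb : l ≤ b) (hm : r + b - 2 * l < H) :
    (((((Finset.Icc 1 H).powersetCard b) ×ˢ ((Finset.Icc 1 H).powersetCard r)).filter
        (fun p => (p.2 ∩ p.1).card = l)).image
        (fun p => ((p.2 ∪ p.1) \ (p.2 ∩ p.1), p.2 ∩ p.1))).card
      = Nat.choose H (r + b - 2 * l) * Nat.choose (H - (r + b - 2 * l)) l :=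
  stmt8_general H r b l hlr hlb
end

section
/- Let H, b, r, λ be positive integers with b < r + λ < H and λ < b. Define an array P with rows indexed by pairs (B, Γ) where B ∈ C([H], b) and Γ ∈ C(B, λ), and columns indexed by A ∈ C([H], r), where p_{(B,Γ),A} = (A ∪ Γ, A \ B) if A ∩ Γ = ∅ and B ⊆ A ∪ Γ, and star otherwise. Then P satisfies PDA condition C2: if p_{(B₁,Γ₁),A₁} = p_{(B₂,Γ₂),A₂} is a non-star entry with ((B₁,Γ₁), A₁) ≠ ((B₂,Γ₂), A₂), then (B₁,Γ₁) ≠ (B₂,Γ₂), A₁ ≠ A₂, and p_{(B₁,Γ₁),A₂} = p_{(B₂,Γ₂),A₁} = *. -/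
/-!
An entry `(C, I) = (A ∪ Γ, A \ B)` determines `B = C \ I`, and, since `A` and `Γ` partition `C`,
each of `A`, `Γ` determines the other. So two equal entries lie in the same block `B` and, unless
they are the same position, differ in both `Γ` and `A`. A cross entry `(B₁, Γ₁), A₂` being
non-star would force `A₂ ⊆ C \ Γ₁ = A₁`, hence `A₂ = A₁` as both have `r` elements.
-/

open Finset

namespace Construction2

variable {α : Type*} [DecidableEq α] {A A₁ A₂ B B₁ B₂ Γ Γ₁ Γ₂ : Finset α}

theorem union_sdiff_sdiff_eq (hΓ : Γ ⊆ B) (hB : B ⊆ A ∪ Γ) : (A ∪ Γ) \ (A \ B) = B := by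
  have hsdiff : (A ∪ Γ) \ B = A \ B := by
    rw [union_sdiff_distrib, sdiff_eq_empty_iff_subset.mpr hΓ, union_empty]
  rw [← hsdiff, Finset.sdiff_sdiff_eq_self hB]

theorem eq_of_union_eq_of_sdiff_eq (hΓ₁ : Γ₁ ⊆ B₁) (hB₁ : B₁ ⊆ A₁ ∪ Γ₁)
    (hΓ₂ : Γ₂ ⊆ B₂) (hB₂ : B₂ ⊆ A₂ ∪ Γ₂)
    (hC : A₁ ∪ Γ₁ = A₂ ∪ Γ₂) (hI : A₁ \ B₁ = A₂ \ B₂) : B₁ = B₂ := by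
  rw [← union_sdiff_sdiff_eq hΓ₁ hB₁, ← union_sdiff_sdiff_eq hΓ₂ hB₂, hC, hI]

theorem left_eq_iff_right_eq_of_union_eq (hd₁ : Disjoint A₁ Γ₁) (hd₂ : Disjoint A₂ Γ₂)
    (hC : A₁ ∪ Γ₁ = A₂ ∪ Γ₂) : A₁ = A₂ ↔ Γ₁ = Γ₂ := by
  constructor
  · intro hA
    rw [← union_sdiff_cancel_left hd₁, ← union_sdiff_cancel_left hd₂, hC, hA]
  · intro hΓ
    rw [← union_sdiff_cancel_right hd₁, ← union_sdiff_cancel_right hd₂, hC, hΓ]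

theorem eq_of_subset_union_of_disjoint (h : A₂ ⊆ A₁ ∪ Γ) (hd : Disjoint A₂ Γ)
    (hcard : #A₁ = #A₂) : A₂ = A₁ :=
  eq_of_subset_of_card_le (hd.left_le_of_le_sup_right h) hcard.le

end Construction2

open Construction2

theorem stmt10_general (H r : ℕ)
    (B₁ B₂ Γ₁ Γ₂ A₁ A₂ : Finset ℕ)
    (hΓ₁ : Γ₁ ⊆ B₁) (hΓ₂ : Γ₂ ⊆ B₂)
    (hA₁ : A₁ ∈ (Finset.Icc 1 H).powersetCard r)
    (hA₂ : A₂ ∈ (Finset.Icc 1 H).powersetCard r)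
    (h₁ : A₁ ∩ Γ₁ = ∅ ∧ B₁ ⊆ A₁ ∪ Γ₁) (h₂ : A₂ ∩ Γ₂ = ∅ ∧ B₂ ⊆ A₂ ∪ Γ₂)
    (heq : (A₁ ∪ Γ₁, A₁ \ B₁) = (A₂ ∪ Γ₂, A₂ \ B₂))
    (hne : ((B₁, Γ₁), A₁) ≠ ((B₂, Γ₂), A₂)) :
    (B₁, Γ₁) ≠ (B₂, Γ₂) ∧ A₁ ≠ A₂
      ∧ ¬(A₂ ∩ Γ₁ = ∅ ∧ B₁ ⊆ A₂ ∪ Γ₁) ∧ ¬(A₁ ∩ Γ₂ = ∅ ∧ B₂ ⊆ A₁ ∪ Γ₂) := by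
  obtain ⟨hd₁, hB₁⟩ := h₁
  obtain ⟨hd₂, hB₂⟩ := h₂
  obtain ⟨hC, hI⟩ := Prod.mk.inj heq
  have hcard : #A₁ = #A₂ := by
    rw [(mem_powersetCard.mp hA₁).2, (mem_powersetCard.mp hA₂).2]
  have hAΓ := left_eq_iff_right_eq_of_union_eq (disjoint_iff_inter_eq_empty.mpr hd₁)
    (disjoint_iff_inter_eq_empty.mpr hd₂) hC
  have hB : B₁ = B₂ := eq_of_union_eq_of_sdiff_eq hΓ₁ hB₁ hΓ₂ hB₂ hC hI
  have hA : A₁ ≠ A₂ := fun hA => hne (by rw [hB, hAΓ.mp hA, hA])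
  refine ⟨fun hrow => hA (hAΓ.mpr (Prod.mk.inj hrow).2), hA, ?_, ?_⟩
  · rintro ⟨hd, -⟩
    exact hA (eq_of_subset_union_of_disjoint (hC ▸ subset_union_left)
      (disjoint_iff_inter_eq_empty.mpr hd) hcard).symm
  · rintro ⟨hd, -⟩
    exact hA (eq_of_subset_union_of_disjoint (hC.symm ▸ subset_union_left)
      (disjoint_iff_inter_eq_empty.mpr hd) hcard.symm)

/-- PDA condition C2 for the array of Construction 2: rows are pairs `(B, Γ)`
with `B ∈ C([H],b)`, `Γ ∈ C(B,λ)`; columns are `A ∈ C([H],r)`; the entry is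
`(A ∪ Γ, A \ B)` when `A ∩ Γ = ∅` and `B ⊆ A ∪ Γ` (star otherwise). Equal
non-star entries at distinct positions lie in distinct rows and distinct
columns, and both cross entries are stars. -/
theorem stmt10 (H b r l : ℕ) (hH : 0 < H) (hb : 0 < b) (hr : 0 < r) (hl : 0 < l)
    (hbrl : b < r + l) (hrlH : r + l < H) (hlb : l < b)
    (B₁ B₂ Γ₁ Γ₂ A₁ A₂ : Finset ℕ)
    (hB₁ : B₁ ∈ (Finset.Icc 1 H).powersetCard b) (hΓ₁ : Γ₁ ⊆ B₁) (hΓ₁c : Γ₁.card = l)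
    (hB₂ : B₂ ∈ (Finset.Icc 1 H).powersetCard b) (hΓ₂ : Γ₂ ⊆ B₂) (hΓ₂c : Γ₂.card = l)
    (hA₁ : A₁ ∈ (Finset.Icc 1 H).powersetCard r)
    (hA₂ : A₂ ∈ (Finset.Icc 1 H).powersetCard r)
    (h₁ : A₁ ∩ Γ₁ = ∅ ∧ B₁ ⊆ A₁ ∪ Γ₁) (h₂ : A₂ ∩ Γ₂ = ∅ ∧ B₂ ⊆ A₂ ∪ Γ₂)
    (heq : (A₁ ∪ Γ₁, A₁ \ B₁) = (A₂ ∪ Γ₂, A₂ \ B₂))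
    (hne : ((B₁, Γ₁), A₁) ≠ ((B₂, Γ₂), A₂)) :
    (B₁, Γ₁) ≠ (B₂, Γ₂) ∧ A₁ ≠ A₂
      ∧ ¬(A₂ ∩ Γ₁ = ∅ ∧ B₁ ⊆ A₂ ∪ Γ₁) ∧ ¬(A₁ ∩ Γ₂ = ∅ ∧ B₂ ⊆ A₁ ∪ Γ₂) :=
  stmt10_general H r B₁ B₂ Γ₁ Γ₂ A₁ A₂ hΓ₁ hΓ₂ hA₁ hA₂ h₁ h₂ heq hne
end

section
/- Let H, b, r, λ be positive integers with b < r + λ < H and λ < b. In the array of Construction 2 (p_{(B,Γ),A} = (A∪Γ, A\B) if A∩Γ = ∅ and B ⊆ A∪Γ, star otherwise), fix a symbol (C, I) with I ⊆ C ⊆ [H], |C| = r + λ, |I| = r + λ − b. Then the entries of the array equal to (C, I) are exactly those at positions ((B, Γ), A) with I ⊆ A ⊆ C, |A| = r, Γ = C \ A, and B = C \ I. In particular, the number of occurrences of each symbol (C, I) equals C(|C \ I|, r − |I|) = C(b, b − λ) = C(b, λ). -/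
open scoped Classical

/-- In the array of Construction 2, for a fixed symbol `(C, I)` with
`I ⊆ C ⊆ [H]`, `|C| = r + λ`, `|I| = r + λ − b`, the positions carrying `(C, I)`
are exactly those `((B, Γ), A)` with `I ⊆ A ⊆ C`, `Γ = C \ A` and `B = C \ I`;
in particular the number of occurrences of `(C, I)` equals `C(b, b − λ)`. -/
theorem stmt11 (H b r l : ℕ) (hH : 0 < H) (hb : 0 < b) (hr : 0 < r) (hl : 0 < l)
    (hbrl : b < r + l) (hrlH : r + l < H) (hlb : l < b)
    (C I : Finset ℕ) (hC : C ⊆ Finset.Icc 1 H) (hI : I ⊆ C)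
    (hCcard : C.card = r + l) (hIcard : I.card = r + l - b) :
    (∀ B Γ A : Finset ℕ,
      B ∈ (Finset.Icc 1 H).powersetCard b → Γ ⊆ B → Γ.card = l →
      A ∈ (Finset.Icc 1 H).powersetCard r →
        ((A ∩ Γ = ∅ ∧ B ⊆ A ∪ Γ ∧ (A ∪ Γ, A \ B) = (C, I))
          ↔ (I ⊆ A ∧ A ⊆ C ∧ Γ = C \ A ∧ B = C \ I)))
    ∧ ((((((Finset.Icc 1 H).powersetCard b) ×ˢ ((Finset.Icc 1 H).powersetCard l)).filter
          (fun p => p.2 ⊆ p.1)) ×ˢ ((Finset.Icc 1 H).powersetCard r)).filter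
          (fun q => q.2 ∩ q.1.2 = ∅ ∧ q.1.1 ⊆ q.2 ∪ q.1.2
            ∧ (q.2 ∪ q.1.2, q.2 \ q.1.1) = (C, I))).card
      = Nat.choose b (b - l) := by
  have key : ∀ B Γ A : Finset ℕ,
      B ∈ (Finset.Icc 1 H).powersetCard b → Γ ⊆ B → Γ.card = l →
      A ∈ (Finset.Icc 1 H).powersetCard r →
        ((A ∩ Γ = ∅ ∧ B ⊆ A ∪ Γ ∧ (A ∪ Γ, A \ B) = (C, I))
          ↔ (I ⊆ A ∧ A ⊆ C ∧ Γ = C \ A ∧ B = C \ I)) := by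
    intro B Γ A hB hΓB hΓcard hA
    constructor
    · rintro ⟨hdisj, hBsub, heq⟩
      rw [Prod.mk.injEq] at heq
      obtain ⟨hAC, hAB⟩ := heq
      subst hAC; subst hAB
      have h1 : ∀ x, x ∈ A → x ∈ Γ → False := by
        intro x hx hy
        have : x ∈ A ∩ Γ := Finset.mem_inter.2 ⟨hx, hy⟩
        simp [hdisj] at this
      refine ⟨Finset.sdiff_subset, Finset.subset_union_left, ?_, ?_⟩
      · ext x
        simp only [Finset.mem_sdiff, Finset.mem_union]
        constructor
        · intro hx
          exact ⟨Or.inr hx, fun hxA => h1 x hxA hx⟩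
        · rintro ⟨hx | hx, hxA⟩
          · exact absurd hx hxA
          · exact hx
      · ext x
        simp only [Finset.mem_sdiff, Finset.mem_union]
        constructor
        · intro hx
          refine ⟨Finset.mem_union.1 (hBsub hx), ?_⟩
          rintro ⟨hxA, hxB⟩
          exact hxB hx
        · rintro ⟨hx | hx, hxnI⟩
          · by_contra hxB
            exact hxnI ⟨hx, hxB⟩
          · exact hΓB hx
    · rintro ⟨hIA, hAC, rfl, rfl⟩
      refine ⟨?_, ?_, ?_⟩
      · ext x
        simp only [Finset.mem_inter, Finset.mem_sdiff, Finset.notMem_empty, iff_false]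
        rintro ⟨hxA, _, hxnA⟩
        exact hxnA hxA
      · rw [Finset.union_sdiff_of_subset hAC]
        exact Finset.sdiff_subset
      · rw [Prod.mk.injEq]
        constructor
        · exact Finset.union_sdiff_of_subset hAC
        · ext x
          simp only [Finset.mem_sdiff, not_and, not_not]
          constructor
          · rintro ⟨hxA, hx⟩
            exact hx (hAC hxA)
          · intro hx
            exact ⟨hIA hx, fun _ => hx⟩
  refine ⟨key, ?_⟩
  -- counting part
  have hICc : I.card ≤ r := by omega
  have hCIcard : (C \ I).card = b := by
    rw [Finset.card_sdiff_of_subset hI, hCcard, hIcard]; omega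
  have hcount : ((((((Finset.Icc 1 H).powersetCard b) ×ˢ ((Finset.Icc 1 H).powersetCard l)).filter
          (fun p => p.2 ⊆ p.1)) ×ˢ ((Finset.Icc 1 H).powersetCard r)).filter
          (fun q => q.2 ∩ q.1.2 = ∅ ∧ q.1.1 ⊆ q.2 ∪ q.1.2
            ∧ (q.2 ∪ q.1.2, q.2 \ q.1.1) = (C, I))).card
      = ((C \ I).powersetCard (r - I.card)).card := by
    apply Finset.card_bij (fun q _ => q.2 \ I)
    · -- maps into target
      rintro ⟨⟨B, Γ⟩, A⟩ hq
      rw [Finset.mem_filter] at hq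
      obtain ⟨hmem, hpred⟩ := hq
      rw [Finset.mem_product, Finset.mem_filter, Finset.mem_product] at hmem
      obtain ⟨⟨⟨hB, hΓ⟩, hΓB⟩, hA⟩ := hmem
      have hchar := (key B Γ A hB hΓB (Finset.mem_powersetCard.1 hΓ).2 hA).1 hpred
      obtain ⟨hIA, hAC, _, _⟩ := hchar
      rw [Finset.mem_powersetCard]
      constructor
      · exact Finset.sdiff_subset_sdiff hAC le_rfl
      · rw [Finset.card_sdiff_of_subset hIA, (Finset.mem_powersetCard.1 hA).2]
    · -- injective
      rintro ⟨⟨B₁, Γ₁⟩, A₁⟩ hq₁ ⟨⟨B₂, Γ₂⟩, A₂⟩ hq₂ heq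
      rw [Finset.mem_filter] at hq₁ hq₂
      obtain ⟨hmem₁, hpred₁⟩ := hq₁
      obtain ⟨hmem₂, hpred₂⟩ := hq₂
      rw [Finset.mem_product, Finset.mem_filter, Finset.mem_product] at hmem₁ hmem₂
      obtain ⟨⟨⟨hB₁, hΓ₁⟩, hΓB₁⟩, hA₁⟩ := hmem₁
      obtain ⟨⟨⟨hB₂, hΓ₂⟩, hΓB₂⟩, hA₂⟩ := hmem₂
      obtain ⟨hIA₁, hAC₁, hΓe₁, hBe₁⟩ :=
        (key B₁ Γ₁ A₁ hB₁ hΓB₁ (Finset.mem_powersetCard.1 hΓ₁).2 hA₁).1 hpred₁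
      obtain ⟨hIA₂, hAC₂, hΓe₂, hBe₂⟩ :=
        (key B₂ Γ₂ A₂ hB₂ hΓB₂ (Finset.mem_powersetCard.1 hΓ₂).2 hA₂).1 hpred₂
      have hAeq : A₁ = A₂ := by
        have : A₁ \ I ∪ I = A₂ \ I ∪ I := by rw [heq]
        rwa [Finset.sdiff_union_of_subset hIA₁, Finset.sdiff_union_of_subset hIA₂] at this
      subst hAeq
      simp [hΓe₁, hΓe₂, hBe₁, hBe₂]
    · -- surjective
      intro D hD
      rw [Finset.mem_powersetCard] at hD
      obtain ⟨hDsub, hDcard⟩ := hD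
      set A := I ∪ D with hAdef
      have hIA : I ⊆ A := Finset.subset_union_left
      have hAC : A ⊆ C := Finset.union_subset hI (hDsub.trans Finset.sdiff_subset)
      have hDI : Disjoint D I := by
        refine Finset.disjoint_left.2 fun x hx hxI => ?_
        exact (Finset.mem_sdiff.1 (hDsub hx)).2 hxI
      have hAcard : A.card = r := by
        rw [hAdef, Finset.card_union_of_disjoint hDI.symm, hIcard, hDcard]
        omega
      refine ⟨⟨⟨C \ I, C \ A⟩, A⟩, ?_, ?_⟩
      · rw [Finset.mem_filter, Finset.mem_product, Finset.mem_filter, Finset.mem_product]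
        have hΓcard : (C \ A).card = l := by
          rw [Finset.card_sdiff_of_subset hAC, hCcard, hAcard]; omega
        have hBmem : C \ I ∈ (Finset.Icc 1 H).powersetCard b :=
          Finset.mem_powersetCard.2 ⟨(Finset.sdiff_subset).trans hC, hCIcard⟩
        have hΓmem : C \ A ∈ (Finset.Icc 1 H).powersetCard l :=
          Finset.mem_powersetCard.2 ⟨(Finset.sdiff_subset).trans hC, hΓcard⟩
        have hAmem : A ∈ (Finset.Icc 1 H).powersetCard r :=
          Finset.mem_powersetCard.2 ⟨hAC.trans hC, hAcard⟩
        have hΓB : C \ A ⊆ C \ I := Finset.sdiff_subset_sdiff le_rfl hIA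
        refine ⟨⟨⟨⟨hBmem, hΓmem⟩, hΓB⟩, hAmem⟩, ?_⟩
        exact (key (C \ I) (C \ A) A hBmem hΓB hΓcard hAmem).2 ⟨hIA, hAC, rfl, rfl⟩
      · simp only
        rw [hAdef, Finset.union_sdiff_cancel_left hDI.symm]
  rw [hcount, Finset.card_powersetCard, hCIcard]
  congr 1
  omega
end

section
/- Let H, b, r, λ be positive integers with b < r + λ < H and λ < b. In the array of Construction 2, for every symbol (C, I) the intersection of all columns A (as r-subsets of [H]) containing (C, I) equals I; in particular it is nonempty, so the array satisfies CPDA condition C3. -/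
/-!
A symbol `(C, I)` sits in column `A` exactly when `I ⊆ A ⊆ C`: the row is then forced to be
`B = C \ I`, `Γ = C \ A`. Since `|I| = r + λ - b ≤ r < r + λ = |C|`, for every point `x ∉ I`
some `r`-set squeezed between `I` and `C.erase x` is such a column, so the columns meet in `I`.
-/

open Finset

open scoped Classical

namespace Finset

variable {α : Type*} [DecidableEq α]

lemma exists_subsuperset_card_eq_notMem {I C : Finset α} {r : ℕ} {x : α} (hIC : I ⊆ C)
    (hI : #I ≤ r) (hC : r < #C) (hx : x ∉ I) : ∃ A, I ⊆ A ∧ A ⊆ C ∧ #A = r ∧ x ∉ A := by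
  obtain ⟨A, hIA, hAC, hA⟩ := exists_subsuperset_card_eq (t := C.erase x)
    (fun y hy => mem_erase.2 ⟨ne_of_mem_of_not_mem hy hx, hIC hy⟩) hI
    (by have := pred_card_le_card_erase (a := x) (s := C); omega)
  exact ⟨A, hIA, hAC.trans (erase_subset x C), hA, fun h => (mem_erase.1 (hAC h)).1 rfl⟩

lemma biInter_coe_eq_of_mem_iff {𝒜 : Finset (Finset α)} {I C : Finset α} {r : ℕ}
    (h𝒜 : ∀ A, A ∈ 𝒜 ↔ I ⊆ A ∧ A ⊆ C ∧ #A = r) (hIC : I ⊆ C) (hI : #I ≤ r) (hC : r < #C) :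
    ⋂ A ∈ 𝒜, (A : Set α) = I := by
  ext x
  simp only [Set.mem_iInter, mem_coe]
  refine ⟨fun hx => ?_, fun hx A hA => ((h𝒜 A).1 hA).1 hx⟩
  by_contra hxI
  obtain ⟨A, hIA, hAC, hA, hxA⟩ := exists_subsuperset_card_eq_notMem hIC hI hC hxI
  exact hxA (hx A ((h𝒜 A).2 ⟨hIA, hAC, hA⟩))

lemma union_sdiff_sdiff_eq {A B Γ : Finset α} (hΓB : Γ ⊆ B) (hB : B ⊆ A ∪ Γ) :
    (A ∪ Γ) \ (A \ B) = B := by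
  ext x
  have := @hΓB x
  have := @hB x
  simp only [mem_sdiff, mem_union] at *
  tauto

end Finset

namespace Construction2

variable {H b l : ℕ} {A C I : Finset ℕ}

/-- Column `A` of the array of Construction 2 contains the symbol `(C, I)` in some row `(B, Γ)`;
here `l` plays the role of `λ`. -/
def HasSymbol (H b l : ℕ) (A C I : Finset ℕ) : Prop :=
  ∃ B ∈ (Icc 1 H).powersetCard b, ∃ Γ ∈ B.powersetCard l,
    A ∩ Γ = ∅ ∧ B ⊆ A ∪ Γ ∧ (A ∪ Γ, A \ B) = (C, I)

lemma HasSymbol.subset (h : HasSymbol H b l A C I) :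
    I ⊆ A ∧ A ⊆ C := by
  obtain ⟨B, -, Γ, -, -, -, hCI⟩ := h
  obtain ⟨rfl, rfl⟩ := Prod.mk.inj hCI
  exact ⟨sdiff_subset, subset_union_left⟩

lemma hasSymbol_of_subset (hCH : C ⊆ Icc 1 H)
    (hCI : #(C \ I) = b) (hCA : #(C \ A) = l) (hIA : I ⊆ A) (hAC : A ⊆ C) :
    HasSymbol H b l A C I := by
  refine ⟨C \ I, mem_powersetCard.2 ⟨sdiff_subset.trans hCH, hCI⟩, C \ A,
    mem_powersetCard.2 ⟨sdiff_subset_sdiff le_rfl hIA, hCA⟩, inter_sdiff_self A C, ?_, ?_⟩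
  · rw [union_sdiff_of_subset hAC]
    exact sdiff_subset
  · rw [union_sdiff_of_subset hAC, Prod.mk.injEq]
    refine ⟨rfl, ?_⟩
    ext x
    have := @hIA x
    have := @hAC x
    simp only [mem_sdiff] at *
    tauto

lemma subset_and_card_of_entry {r : ℕ}
    (hocc : ∃ B ∈ (Icc 1 H).powersetCard b, ∃ Γ ∈ B.powersetCard l,
      ∃ A ∈ (Icc 1 H).powersetCard r,
        A ∩ Γ = ∅ ∧ B ⊆ A ∪ Γ ∧ (A ∪ Γ, A \ B) = (C, I)) :
    I ⊆ C ∧ C ⊆ Icc 1 H ∧ #C = r + l ∧ #(C \ I) = b := by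
  obtain ⟨B, hB, Γ, hΓ, A, hA, hAΓ, hBAΓ, hCI⟩ := hocc
  rw [mem_powersetCard] at hB hΓ hA
  obtain ⟨rfl, rfl⟩ := Prod.mk.inj hCI
  refine ⟨sdiff_subset.trans subset_union_left, union_subset hA.1 (hΓ.1.trans hB.1), ?_, ?_⟩
  · rw [card_union_of_disjoint (disjoint_iff_inter_eq_empty.2 hAΓ), hA.2, hΓ.2]
  · rw [union_sdiff_sdiff_eq hΓ.1 hBAΓ, hB.2]

lemma mem_filter_hasSymbol_iff {r : ℕ} (hCH : C ⊆ Icc 1 H) (hC : #C = r + l)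
    (hCI : #(C \ I) = b) :
    A ∈ ((Icc 1 H).powersetCard r).filter (fun A => HasSymbol H b l A C I) ↔
      I ⊆ A ∧ A ⊆ C ∧ #A = r := by
  rw [mem_filter, mem_powersetCard]
  constructor
  · rintro ⟨⟨-, hA⟩, hsym⟩
    exact ⟨hsym.subset.1, hsym.subset.2, hA⟩
  · rintro ⟨hIA, hAC, hA⟩
    refine ⟨⟨hAC.trans hCH, hA⟩, hasSymbol_of_subset hCH hCI ?_ hIA hAC⟩
    rw [card_sdiff_of_subset hAC]
    omega

end Construction2

theorem stmt12_general (H b r l : ℕ) (hl : 0 < l)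
    (hbrl : b < r + l) (hlb : l < b)
    (C I : Finset ℕ)
    (hocc : ∃ B ∈ (Finset.Icc 1 H).powersetCard b, ∃ Γ ∈ B.powersetCard l,
      ∃ A ∈ (Finset.Icc 1 H).powersetCard r,
        A ∩ Γ = ∅ ∧ B ⊆ A ∪ Γ ∧ (A ∪ Γ, A \ B) = (C, I)) :
    (⋂ A ∈ ((Finset.Icc 1 H).powersetCard r).filter
        (fun A => ∃ B ∈ (Finset.Icc 1 H).powersetCard b, ∃ Γ ∈ B.powersetCard l,
          A ∩ Γ = ∅ ∧ B ⊆ A ∪ Γ ∧ (A ∪ Γ, A \ B) = (C, I)), (A : Set ℕ)) = (I : Set ℕ)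
    ∧ I.Nonempty := by
  obtain ⟨hIC, hCH, hC, hCI⟩ := Construction2.subset_and_card_of_entry hocc
  have hI : #I + b = r + l := by rw [← hC, ← hCI, add_comm, card_sdiff_add_card_eq_card hIC]
  refine ⟨?_, card_pos.1 (by omega)⟩
  exact biInter_coe_eq_of_mem_iff (fun A => Construction2.mem_filter_hasSymbol_iff hCH hC hCI)
    hIC (by omega) (by omega)

/-- In the array of Construction 2, for every symbol `(C, I)` occurring in the
array the intersection of all columns `A` containing `(C, I)` equals `I`; in
particular it is nonempty (CPDA condition C3). -/
theorem stmt12 (H b r l : ℕ) (hH : 0 < H) (hb : 0 < b) (hr : 0 < r) (hl : 0 < l)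
    (hbrl : b < r + l) (hrlH : r + l < H) (hlb : l < b)
    (C I : Finset ℕ)
    (hocc : ∃ B ∈ (Finset.Icc 1 H).powersetCard b, ∃ Γ ∈ B.powersetCard l,
      ∃ A ∈ (Finset.Icc 1 H).powersetCard r,
        A ∩ Γ = ∅ ∧ B ⊆ A ∪ Γ ∧ (A ∪ Γ, A \ B) = (C, I)) :
    (⋂ A ∈ ((Finset.Icc 1 H).powersetCard r).filter
        (fun A => ∃ B ∈ (Finset.Icc 1 H).powersetCard b, ∃ Γ ∈ B.powersetCard l,
          A ∩ Γ = ∅ ∧ B ⊆ A ∪ Γ ∧ (A ∪ Γ, A \ B) = (C, I)), (A : Set ℕ)) = (I : Set ℕ)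
    ∧ I.Nonempty :=
  stmt12_general H b r l hl hbrl hlb C I hocc
end

section
/- Let H, b, r, λ be positive integers with b < r + λ < H and λ < b. The number of distinct non-star symbols in the array of Construction 2 is C(H, r + λ) · C(r + λ, r + λ − b). -/
open scoped Classical

/-!
The symbol `(A ∪ Γ, A \ B)` at a position is a pair `I ⊆ C` with `#C = r + λ` and
`#I = r + λ - b`, since `Γ ⊆ B ⊆ A ∪ Γ`. Conversely every such pair occurs: put `B = C \ I`,
choose `Γ ⊆ B` with `λ` elements (possible as `λ < b`) and `A = C \ Γ`. So the symbols are
exactly the nested pairs, counted by choosing `C` and then `I ⊆ C`.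
-/

open Finset

namespace Construction2

variable {α : Type*} [DecidableEq α]

/-- The positions `((B, Γ), A)` of the array, where `l` stands for `λ`. -/
def admissiblePositions (S : Finset α) (b l r : ℕ) :
    Finset ((Finset α × Finset α) × Finset α) :=
  (((S.powersetCard b ×ˢ S.powersetCard l).filter fun p => p.2 ⊆ p.1) ×ˢ
      S.powersetCard r).filter fun q => q.2 ∩ q.1.2 = ∅ ∧ q.1.1 ⊆ q.2 ∪ q.1.2

def symbol (q : (Finset α × Finset α) × Finset α) : Finset α × Finset α :=
  (q.2 ∪ q.1.2, q.2 \ q.1.1)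

def nestedPairs (S : Finset α) (n k : ℕ) : Finset (Finset α × Finset α) :=
  (S.powersetCard n ×ˢ S.powersetCard k).filter fun p => p.2 ⊆ p.1

theorem filter_subset_powersetCard {S C : Finset α} (hC : C ⊆ S) (k : ℕ) :
    (S.powersetCard k).filter (· ⊆ C) = C.powersetCard k := by
  ext I
  simp only [mem_filter, mem_powersetCard]
  exact ⟨fun ⟨⟨_, hk⟩, hIC⟩ => ⟨hIC, hk⟩, fun ⟨hIC, hk⟩ => ⟨⟨hIC.trans hC, hk⟩, hIC⟩⟩

theorem card_nestedPairs (S : Finset α) (n k : ℕ) :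
    #(nestedPairs S n k) = (#S).choose n * n.choose k := by
  rw [nestedPairs, card_filter, sum_product]
  calc ∑ C ∈ S.powersetCard n, ∑ I ∈ S.powersetCard k, (if I ⊆ C then 1 else 0)
      = ∑ C ∈ S.powersetCard n, n.choose k := sum_congr rfl fun C hC => by
        obtain ⟨hCS, hCn⟩ := mem_powersetCard.1 hC
        rw [← card_filter, filter_subset_powersetCard hCS, card_powersetCard, hCn]
    _ = (#S).choose n * n.choose k := by rw [sum_const, card_powersetCard, smul_eq_mul]

theorem sdiff_union_eq_sdiff_of_subset {A B Γ : Finset α} (hΓB : Γ ⊆ B) :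
    (A ∪ Γ) \ B = A \ B := by
  rw [union_sdiff_distrib, sdiff_eq_empty_iff_subset.2 hΓB, union_empty]

theorem symbol_mem_nestedPairs {S : Finset α} {b l r : ℕ} {q : (Finset α × Finset α) × Finset α}
    (hq : q ∈ admissiblePositions S b l r) : symbol q ∈ nestedPairs S (r + l) (r + l - b) := by
  obtain ⟨⟨B, Γ⟩, A⟩ := q
  simp only [admissiblePositions, nestedPairs, symbol, mem_filter, mem_product,
    mem_powersetCard] at hq ⊢
  obtain ⟨⟨⟨⟨⟨-, hB⟩, hΓS, hΓ⟩, hΓB⟩, hAS, hA⟩, hAΓ, hBAΓ⟩ := hq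
  have hC : #(A ∪ Γ) = r + l := by
    rw [card_union_of_disjoint (disjoint_iff_inter_eq_empty.2 hAΓ), hA, hΓ]
  refine ⟨⟨⟨union_subset hAS hΓS, hC⟩, sdiff_subset.trans hAS, ?_⟩,
    sdiff_subset.trans subset_union_left⟩
  rw [← sdiff_union_eq_sdiff_of_subset hΓB, card_sdiff_of_subset hBAΓ, hC, hB]

theorem exists_admissiblePosition {S : Finset α} {b l r : ℕ} (hlb : l ≤ b) (hbrl : b ≤ r + l)
    {p : Finset α × Finset α} (hp : p ∈ nestedPairs S (r + l) (r + l - b)) :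
    ∃ q ∈ admissiblePositions S b l r, symbol q = p := by
  obtain ⟨C, I⟩ := p
  simp only [admissiblePositions, nestedPairs, symbol, mem_filter, mem_product,
    mem_powersetCard, Prod.exists, Prod.mk.injEq] at hp ⊢
  obtain ⟨⟨⟨hCS, hC⟩, -, hI⟩, hIC⟩ := hp
  have hB : #(C \ I) = b := by rw [card_sdiff_of_subset hIC, hC, hI]; omega
  obtain ⟨Γ, hΓB, hΓ⟩ := exists_subset_card_eq (hB ▸ hlb : l ≤ #(C \ I))
  have hΓC : Γ ⊆ C := hΓB.trans sdiff_subset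
  have hA : #(C \ Γ) = r := by rw [card_sdiff_of_subset hΓC, hC, hΓ]; omega
  have hAΓ : C \ Γ ∪ Γ = C := sdiff_union_of_subset hΓC
  refine ⟨C \ I, Γ, C \ Γ, ⟨⟨⟨⟨⟨sdiff_subset.trans hCS, hB⟩, hΓC.trans hCS, hΓ⟩, hΓB⟩,
    sdiff_subset.trans hCS, hA⟩, sdiff_inter_self _ _, by rw [hAΓ]; exact sdiff_subset⟩, hAΓ, ?_⟩
  ext x
  simp only [mem_sdiff, not_and, not_not]
  exact ⟨fun h => h.2 h.1.1,
    fun hx => ⟨⟨hIC hx, fun hxΓ => (mem_sdiff.1 (hΓB hxΓ)).2 hx⟩, fun _ => hx⟩⟩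

theorem image_symbol_admissiblePositions (S : Finset α) {b l r : ℕ} (hlb : l ≤ b)
    (hbrl : b ≤ r + l) :
    (admissiblePositions S b l r).image symbol = nestedPairs S (r + l) (r + l - b) := by
  ext p
  rw [mem_image]
  exact ⟨fun ⟨q, hq, hqp⟩ => hqp ▸ symbol_mem_nestedPairs hq,
    exists_admissiblePosition hlb hbrl⟩

end Construction2

open Construction2 in
theorem stmt13_general (H b r l : ℕ)
    (hbrl : b < r + l) (hlb : l < b) :
    (((((((Finset.Icc 1 H).powersetCard b) ×ˢ ((Finset.Icc 1 H).powersetCard l)).filter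
          (fun p => p.2 ⊆ p.1)) ×ˢ ((Finset.Icc 1 H).powersetCard r)).filter
          (fun q => q.2 ∩ q.1.2 = ∅ ∧ q.1.1 ⊆ q.2 ∪ q.1.2)).image
          (fun q => (q.2 ∪ q.1.2, q.2 \ q.1.1))).card
      = Nat.choose H (r + l) * Nat.choose (r + l) (r + l - b) := by
  change #((admissiblePositions (Icc 1 H) b l r).image symbol) = _
  rw [image_symbol_admissiblePositions _ hlb.le hbrl.le, card_nestedPairs, Nat.card_Icc,
    Nat.add_sub_cancel]

/-- The number of distinct non-star symbols in the array of Construction 2 is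
`C(H, r+λ) · C(r+λ, r+λ−b)`. -/
theorem stmt13 (H b r l : ℕ) (hH : 0 < H) (hb : 0 < b) (hr : 0 < r) (hl : 0 < l)
    (hbrl : b < r + l) (hrlH : r + l < H) (hlb : l < b) :
    (((((((Finset.Icc 1 H).powersetCard b) ×ˢ ((Finset.Icc 1 H).powersetCard l)).filter
          (fun p => p.2 ⊆ p.1)) ×ˢ ((Finset.Icc 1 H).powersetCard r)).filter
          (fun q => q.2 ∩ q.1.2 = ∅ ∧ q.1.1 ⊆ q.2 ∪ q.1.2)).image
          (fun q => (q.2 ∪ q.1.2, q.2 \ q.1.1))).card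
      = Nat.choose H (r + l) * Nat.choose (r + l) (r + l - b) :=
  stmt13_general H b r l hbrl hlb
end

section
/- Let H, r, b, λ be positive integers with λ ≤ min{r, b} and r + b − 2λ < H. In the array P of Construction 1, each column A ∈ C([H], r) contains exactly C(r, λ) · C(H − r, b − λ) non-star entries, and each non-star symbol (C, I) occurs in exactly C(r + b − 2λ, r − λ) positions of the array. -/
/-!
Both counts are bijections. A column `A` meets a row `B` in exactly `λ` points iff `B` splits
as `(A ∩ B) ∪ (B \ A)` with `A ∩ B` a `λ`-subset of `A` and `B \ A` a `(b - λ)`-subset of the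
complement of `A`. The positions carrying a symbol `(C, I)` are the pairs `(C \ A' ∪ I, A' ∪ I)`,
where `A' = A \ I` ranges over the `(r - λ)`-subsets of `C`.
-/

open Finset

section

variable {α : Type*} [DecidableEq α]

theorem card_filter_powersetCard_card_inter {U A : Finset α} (hAU : A ⊆ U) {b l : ℕ}
    (hlb : l ≤ b) :
    #{B ∈ U.powersetCard b | #(A ∩ B) = l} = (#A).choose l * (#U - #A).choose (b - l) := by
  rw [← card_sdiff_of_subset hAU, ← card_powersetCard, ← card_powersetCard, ← card_product]
  symm
  refine card_nbij' (fun p => p.1 ∪ p.2) (fun B => (A ∩ B, B \ A)) ?_ ?_ ?_ ?_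
  · rintro ⟨s, t⟩ hst
    simp only [coe_product, Set.mem_prod, mem_coe, mem_powersetCard, subset_sdiff] at hst
    obtain ⟨⟨hsA, hs⟩, ⟨htU, htA⟩, ht⟩ := hst
    have hAs : A ∩ (s ∪ t) = s := by
      rw [inter_union_distrib_left, inter_eq_right.2 hsA,
        disjoint_iff_inter_eq_empty.1 htA.symm, union_empty]
    simp only [coe_filter, Set.mem_ofPred_eq, mem_powersetCard, hAs, hs, and_true]
    refine ⟨union_subset (hsA.trans hAU) htU, ?_⟩
    rw [card_union_of_disjoint (htA.symm.mono_left hsA)]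
    omega
  · intro B hB
    simp only [coe_filter, Set.mem_ofPred_eq, mem_powersetCard] at hB
    obtain ⟨⟨hBU, rfl⟩, hl⟩ := hB
    simp only [coe_product, Set.mem_prod, mem_coe, mem_powersetCard]
    exact ⟨⟨inter_subset_left, hl⟩, sdiff_subset_sdiff hBU subset_rfl, by rw [card_sdiff, hl]⟩
  · rintro ⟨s, t⟩ hst
    simp only [coe_product, Set.mem_prod, mem_coe, mem_powersetCard, subset_sdiff] at hst
    obtain ⟨⟨hsA, -⟩, ⟨-, htA⟩, -⟩ := hst
    simp only [inter_union_distrib_left, inter_eq_right.2 hsA,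
      disjoint_iff_inter_eq_empty.1 htA.symm, union_empty, union_sdiff_distrib,
      sdiff_eq_empty_iff_subset.2 hsA, htA.sdiff_eq_left, empty_union]
  · intro B _
    show A ∩ B ∪ B \ A = B
    rw [union_comm, inter_comm, sdiff_union_inter]

theorem card_filter_symmDiff_inter_eq {U C I : Finset α} (hCI : Disjoint C I) (hU : C ∪ I ⊆ U)
    (k : ℕ) :
    #{p ∈ U.powersetCard (#C - k + #I) ×ˢ U.powersetCard (k + #I) |
        ((p.2 ∪ p.1) \ (p.2 ∩ p.1), p.2 ∩ p.1) = (C, I)} = (#C).choose k := by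
  rw [← card_powersetCard]
  symm
  refine card_nbij' (fun A' => (C \ A' ∪ I, A' ∪ I)) (fun p => p.2 \ I) ?_ ?_ ?_ ?_
  · intro A' hA'
    simp only [mem_coe, mem_powersetCard] at hA'
    obtain ⟨hA'C, rfl⟩ := hA'
    have hinter : (A' ∪ I) ∩ (C \ A' ∪ I) = I := by
      ext x; simp only [mem_inter, mem_union, mem_sdiff]; tauto
    have hunion : (A' ∪ I) ∪ (C \ A' ∪ I) = C ∪ I := by
      ext x; simp only [mem_union, mem_sdiff]; grind
    simp only [coe_filter, mem_product, mem_powersetCard, Set.mem_ofPred_eq, hinter, hunion,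
      union_sdiff_right, hCI.sdiff_eq_left]
    refine ⟨⟨⟨?_, ?_⟩, ?_, ?_⟩, trivial⟩
    · exact (union_subset_union sdiff_subset subset_rfl).trans hU
    · rw [card_union_of_disjoint (hCI.mono_left sdiff_subset), card_sdiff_of_subset hA'C]
    · exact (union_subset_union hA'C subset_rfl).trans hU
    · rw [card_union_of_disjoint (hCI.mono_left hA'C)]
  · rintro ⟨B, A⟩ hp
    simp only [coe_filter, mem_product, mem_powersetCard, Set.mem_ofPred_eq, Prod.mk.injEq] at hp
    obtain ⟨⟨-, -, hA⟩, rfl, rfl⟩ := hp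
    simp only [mem_coe, mem_powersetCard]
    refine ⟨sdiff_subset_sdiff subset_union_left subset_rfl, ?_⟩
    rw [card_sdiff_of_subset inter_subset_left, hA]; omega
  · intro A' hA'
    simp only [mem_coe, mem_powersetCard] at hA'
    exact union_sdiff_cancel_right (hCI.mono_left hA'.1)
  · rintro ⟨B, A⟩ hp
    simp only [coe_filter, mem_product, mem_powersetCard, Set.mem_ofPred_eq, Prod.mk.injEq] at hp
    obtain ⟨-, rfl, rfl⟩ := hp
    ext x <;> simp only [mem_inter, mem_union, mem_sdiff] <;> tauto

end

theorem stmt15_general (H r b l : ℕ)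
    (hlr : l ≤ r) (hlb : l ≤ b) :
    (∀ A ∈ (Finset.Icc 1 H).powersetCard r,
      (((Finset.Icc 1 H).powersetCard b).filter (fun B => (A ∩ B).card = l)).card
        = Nat.choose r l * Nat.choose (H - r) (b - l))
    ∧ (∀ C I : Finset ℕ, Disjoint C I → C ∪ I ⊆ Finset.Icc 1 H →
        C.card = r + b - 2 * l → I.card = l →
        ((((Finset.Icc 1 H).powersetCard b) ×ˢ ((Finset.Icc 1 H).powersetCard r)).filter
            (fun p => (p.2 ∩ p.1).card = l
              ∧ ((p.2 ∪ p.1) \ (p.2 ∩ p.1), p.2 ∩ p.1) = (C, I))).card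
          = Nat.choose (r + b - 2 * l) (r - l)) := by
  refine ⟨fun A hA => ?_, fun C I hCI hU hC hI => ?_⟩
  · rw [mem_powersetCard] at hA
    rw [card_filter_powersetCard_card_inter hA.1 hlb, hA.2, Nat.card_Icc, Nat.add_sub_cancel]
  · have hcard : ∀ p : Finset ℕ × Finset ℕ, ((p.2 ∪ p.1) \ (p.2 ∩ p.1), p.2 ∩ p.1) = (C, I) →
        #(p.2 ∩ p.1) = l := fun p h => by
      rw [show p.2 ∩ p.1 = I from congrArg Prod.snd h, hI]
    rw [filter_congr fun p _ => and_iff_right_of_imp (hcard p), ← hC]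
    -- the remaining goals are `b = #C - (r - l) + #I` and `r = r - l + #I`
    convert card_filter_symmDiff_inter_eq hCI hU (r - l) using 5 <;> omega

/-- In the array `P` of Construction 1: each column `A ∈ C([H], r)` contains
exactly `C(r,λ) · C(H−r, b−λ)` non-star entries, and each non-star symbol
`(C, I)` (disjoint sets with `|C| = r+b−2λ`, `|I| = λ`, `C ∪ I ⊆ [H]`) occurs in
exactly `C(r+b−2λ, r−λ)` positions of the array. -/
theorem stmt15 (H r b l : ℕ) (hH : 0 < H) (hr : 0 < r) (hb : 0 < b) (hl : 0 < l)
    (hlr : l ≤ r) (hlb : l ≤ b) (hm : r + b - 2 * l < H) :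
    (∀ A ∈ (Finset.Icc 1 H).powersetCard r,
      (((Finset.Icc 1 H).powersetCard b).filter (fun B => (A ∩ B).card = l)).card
        = Nat.choose r l * Nat.choose (H - r) (b - l))
    ∧ (∀ C I : Finset ℕ, Disjoint C I → C ∪ I ⊆ Finset.Icc 1 H →
        C.card = r + b - 2 * l → I.card = l →
        ((((Finset.Icc 1 H).powersetCard b) ×ˢ ((Finset.Icc 1 H).powersetCard r)).filter
            (fun p => (p.2 ∩ p.1).card = l
              ∧ ((p.2 ∪ p.1) \ (p.2 ∩ p.1), p.2 ∩ p.1) = (C, I))).card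
          = Nat.choose (r + b - 2 * l) (r - l)) :=
  stmt15_general H r b l hlr hlb
end

section
/- Let H, r, b, λ be positive integers with λ ≤ min{r,b}, r + b − 2λ < H, and suppose symbols (C₁, I₁) and (C₂, I₂) of the array P of Construction 1 occur at positions (B₁, A₁) and (B₂, A₂) respectively with (C₁, I₁) = (C₂, I₂), A₁ ≠ A₂ and B₁ ≠ B₂. Then |A₁ ∩ B₂| > λ and |A₂ ∩ B₁| > λ. -/
/-!
Write `I` and `C` for the common intersection and symmetric difference. Every point of `A₁`
outside `I` lies in `C = (A₂ ∪ B₂) \ I`; if `A₁ ∩ B₂` were no larger than `I` it would equal `I`,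
so such a point cannot lie in `B₂` and must lie in `A₂`. Hence `A₁ ⊆ A₂`, and equal sizes force
`A₁ = A₂`.
-/

namespace Finset

variable {α : Type*} [DecidableEq α] {X Y U V : Finset α}

theorem subset_of_inter_eq_of_sdiff_eq (hI : X ∩ Y = U ∩ V)
    (hC : (X ∪ Y) \ (X ∩ Y) = (U ∪ V) \ (U ∩ V)) (hXV : X ∩ V ⊆ X ∩ Y) : X ⊆ U := by
  intro x hx
  by_cases hxI : x ∈ X ∩ Y
  · rw [hI] at hxI
    exact (mem_inter.mp hxI).1
  · have hxC : x ∈ (U ∪ V) \ (U ∩ V) := hC ▸ mem_sdiff.mpr ⟨mem_union_left _ hx, hxI⟩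
    rcases mem_union.mp (mem_sdiff.mp hxC).1 with hU | hV
    · exact hU
    · exact absurd (hXV (mem_inter.mpr ⟨hx, hV⟩)) hxI

theorem card_inter_lt_card_inter_of_inter_eq_of_sdiff_eq (hI : X ∩ Y = U ∩ V)
    (hC : (X ∪ Y) \ (X ∩ Y) = (U ∪ V) \ (U ∩ V)) (hcard : X.card = U.card) (hne : X ≠ U) :
    (X ∩ Y).card < (X ∩ V).card := by
  by_contra! hle
  have hsub : X ∩ Y ⊆ X ∩ V :=
    subset_inter inter_subset_left (hI ▸ inter_subset_right)
  have hXV : X ∩ V ⊆ X ∩ Y := (eq_of_subset_of_card_le hsub hle).ge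
  exact hne (eq_of_subset_of_card_le (subset_of_inter_eq_of_sdiff_eq hI hC hXV) hcard.ge)

end Finset

theorem stmt16_general (H r l : ℕ)
    (B₁ B₂ A₁ A₂ : Finset ℕ)
    (hA₁ : A₁ ∈ (Finset.Icc 1 H).powersetCard r)
    (hA₂ : A₂ ∈ (Finset.Icc 1 H).powersetCard r)
    (h₁ : (A₁ ∩ B₁).card = l) (h₂ : (A₂ ∩ B₂).card = l)
    (heq : ((A₁ ∪ B₁) \ (A₁ ∩ B₁), A₁ ∩ B₁) = ((A₂ ∪ B₂) \ (A₂ ∩ B₂), A₂ ∩ B₂))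
    (hA : A₁ ≠ A₂) :
    l < (A₁ ∩ B₂).card ∧ l < (A₂ ∩ B₁).card := by
  obtain ⟨hC, hI⟩ := Prod.mk.inj heq
  have hcard : A₁.card = A₂.card :=
    (Finset.mem_powersetCard.mp hA₁).2.trans (Finset.mem_powersetCard.mp hA₂).2.symm
  constructor
  · exact h₁ ▸ Finset.card_inter_lt_card_inter_of_inter_eq_of_sdiff_eq hI hC hcard hA
  · exact h₂ ▸ Finset.card_inter_lt_card_inter_of_inter_eq_of_sdiff_eq hI.symm hC.symm
      hcard.symm hA.symm

/-- Quantitative cross-star condition for the array `P` of Construction 1: if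
the same symbol occurs at positions `(B₁, A₁)` and `(B₂, A₂)` with `A₁ ≠ A₂` and
`B₁ ≠ B₂`, then `|A₁ ∩ B₂| > λ` and `|A₂ ∩ B₁| > λ`. -/
theorem stmt16 (H r b l : ℕ) (hH : 0 < H) (hr : 0 < r) (hb : 0 < b) (hl : 0 < l)
    (hlr : l ≤ r) (hlb : l ≤ b) (hm : r + b - 2 * l < H)
    (B₁ B₂ A₁ A₂ : Finset ℕ)
    (hB₁ : B₁ ∈ (Finset.Icc 1 H).powersetCard b)
    (hB₂ : B₂ ∈ (Finset.Icc 1 H).powersetCard b)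
    (hA₁ : A₁ ∈ (Finset.Icc 1 H).powersetCard r)
    (hA₂ : A₂ ∈ (Finset.Icc 1 H).powersetCard r)
    (h₁ : (A₁ ∩ B₁).card = l) (h₂ : (A₂ ∩ B₂).card = l)
    (heq : ((A₁ ∪ B₁) \ (A₁ ∩ B₁), A₁ ∩ B₁) = ((A₂ ∪ B₂) \ (A₂ ∩ B₂), A₂ ∩ B₂))
    (hA : A₁ ≠ A₂) (hB : B₁ ≠ B₂) :
    l < (A₁ ∩ B₂).card ∧ l < (A₂ ∩ B₁).card :=
  stmt16_general H r l B₁ B₂ A₁ A₂ hA₁ hA₂ h₁ h₂ heq hA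
end
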